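/- arXiv:2502.18253 — 2 statements merged into one kernel-verified Lean document; each statement's English description precedes it below -/
import Mathlib

section
/- Under the balanced within-stratum design, the difference between the overall difference-in-means estimator and the inverse-probability-weighting estimator admits the exact stratum decomposition τ̂_DIM − τ̂_IPW = Σ_{x ∈ 𝒳, n_x > 0} (n_x / n) · (1 − 1/π̂(x)) · τ̂_HTE(x). -/
open Finset

noncomputable section

variable {N : ℕ} {𝒳 : Type*} [Fintype 𝒳] [DecidableEq 𝒳]

/-- Number of sampled units in stratum `x`: `n_x = #{i : S_i = 1, X_i = x}`. -/
def nStratum (X : Fin N → 𝒳) (S : Fin N → Bool) (x : 𝒳) : ℕ :=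
  (univ.filter fun i => S i = true ∧ X i = x).card

/-- Total number of sampled units: `n = #{i : S_i = 1}`. -/
def nSample (S : Fin N → Bool) : ℕ :=
  (univ.filter fun i => S i = true).card

/-- Stratum-level difference-in-means estimator `τ̂_HTE(x)`. -/
def tauHTE (X : Fin N → 𝒳) (S W : Fin N → Bool) (Y1 Y0 : Fin N → ℝ) (x : 𝒳) : ℝ :=
  (2 / (nStratum X S x : ℝ)) *
      ∑ i ∈ univ.filter (fun i => S i = true ∧ X i = x ∧ W i = true), Y1 i
    - (2 / (nStratum X S x : ℝ)) *
      ∑ i ∈ univ.filter (fun i => S i = true ∧ X i = x ∧ W i = false), Y0 i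

/-- Overall difference-in-means estimator `τ̂_DIM`. -/
def tauDIM (S W : Fin N → Bool) (Y1 Y0 : Fin N → ℝ) : ℝ :=
  (1 / ((univ.filter fun i => S i = true ∧ W i = true).card : ℝ)) *
      ∑ i ∈ univ.filter (fun i => S i = true ∧ W i = true), Y1 i
    - (1 / ((univ.filter fun i => S i = true ∧ W i = false).card : ℝ)) *
      ∑ i ∈ univ.filter (fun i => S i = true ∧ W i = false), Y0 i

/-- Inverse-probability-weighting estimator `τ̂_IPW` with weight function `π̂`. -/
def tauIPW (X : Fin N → 𝒳) (S W : Fin N → Bool) (Y1 Y0 : Fin N → ℝ) (piHat : 𝒳 → ℝ) : ℝ :=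
  (1 / ((univ.filter fun i => S i = true ∧ W i = true).card : ℝ)) *
      ∑ i ∈ univ.filter (fun i => S i = true ∧ W i = true), Y1 i / piHat (X i)
    - (1 / ((univ.filter fun i => S i = true ∧ W i = false).card : ℝ)) *
      ∑ i ∈ univ.filter (fun i => S i = true ∧ W i = false), Y0 i / piHat (X i)

/-- Balanced within-stratum design: in every nonempty stratum, the number of sampled
treated units equals the number of sampled control units, and both are positive. -/
def BalancedDesign (X : Fin N → 𝒳) (S W : Fin N → Bool) : Prop :=
  ∀ x : 𝒳, 0 < nStratum X S x →
    (univ.filter fun i => S i = true ∧ X i = x ∧ W i = true).card =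
        (univ.filter fun i => S i = true ∧ X i = x ∧ W i = false).card ∧
    0 < (univ.filter fun i => S i = true ∧ X i = x ∧ W i = true).card

/-! Balance within every stratum forces equally many treated and control units overall, so both
arms of `τ̂_DIM` and `τ̂_IPW` carry the common weight `1 / #treated = 2 / n`. The difference of the
two estimators is then a single weighted sum of `Y (1 - 1/π̂(X))` over the sample, and splitting it
by stratum produces exactly the stratum contrasts `(n_x / n) · τ̂_HTE(x)`. -/

theorem sum_mul_comp_eq_sum_mul_sum_fiber {ι R : Type*} [CommSemiring R] (s : Finset ι)
    (X : ι → 𝒳) (f : ι → R) (g : 𝒳 → R) :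
    ∑ i ∈ s, f i * g (X i) = ∑ x, g x * ∑ i ∈ s with X i = x, f i := by
  rw [← sum_fiberwise s X]
  refine sum_congr rfl fun x _ => ?_
  rw [mul_sum]
  refine sum_congr rfl fun i hi => ?_
  rw [(mem_filter.mp hi).2, mul_comm]

def sampleArm (S W : Fin N → Bool) (w : Bool) : Finset (Fin N) :=
  univ.filter fun i => S i = true ∧ W i = w

def stratumArm (X : Fin N → 𝒳) (S W : Fin N → Bool) (x : 𝒳) (w : Bool) : Finset (Fin N) :=
  univ.filter fun i => S i = true ∧ X i = x ∧ W i = w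

section

variable (X : Fin N → 𝒳) (S W : Fin N → Bool)

omit [Fintype 𝒳] in
theorem filter_sampleArm_eq_stratumArm (x : 𝒳) (w : Bool) :
    {i ∈ sampleArm S W w | X i = x} = stratumArm X S W x w := by
  ext i
  simp only [sampleArm, stratumArm, mem_filter, mem_univ, true_and]
  tauto

omit [Fintype 𝒳] in
theorem nStratum_eq_card_add_card (x : 𝒳) :
    nStratum X S x = #(stratumArm X S W x true) + #(stratumArm X S W x false) := by
  rw [nStratum, ← card_filter_add_card_filter_not (fun i => W i = true)]
  simp only [stratumArm, filter_filter, Bool.not_eq_true, and_assoc]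

theorem nSample_eq_card_add_card :
    nSample S = #(sampleArm S W true) + #(sampleArm S W false) := by
  rw [nSample, ← card_filter_add_card_filter_not (fun i => W i = true)]
  simp only [sampleArm, filter_filter, Bool.not_eq_true]

theorem sum_sampleArm_mul_eq_sum_stratumArm (w : Bool) (f : Fin N → ℝ) (g : 𝒳 → ℝ) :
    ∑ i ∈ sampleArm S W w, f i * g (X i) = ∑ x, g x * ∑ i ∈ stratumArm X S W x w, f i := by
  simp only [sum_mul_comp_eq_sum_mul_sum_fiber, filter_sampleArm_eq_stratumArm]

omit [Fintype 𝒳] [DecidableEq 𝒳] in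
theorem tauDIM_sub_tauIPW_eq (Y1 Y0 : Fin N → ℝ) (piHat : 𝒳 → ℝ) :
    tauDIM S W Y1 Y0 - tauIPW X S W Y1 Y0 piHat =
      1 / #(sampleArm S W true) * ∑ i ∈ sampleArm S W true, Y1 i * (1 - 1 / piHat (X i)) -
        1 / #(sampleArm S W false) * ∑ i ∈ sampleArm S W false, Y0 i * (1 - 1 / piHat (X i)) := by
  simp only [tauDIM, tauIPW, sampleArm, mul_sub, mul_one, mul_one_div, sum_sub_distrib]
  ring

omit [Fintype 𝒳] in
theorem nStratum_div_mul_tauHTE (Y1 Y0 : Fin N → ℝ) (x : 𝒳) :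
    nStratum X S x / nSample S * tauHTE X S W Y1 Y0 x =
      2 / nSample S *
        (∑ i ∈ stratumArm X S W x true, Y1 i - ∑ i ∈ stratumArm X S W x false, Y0 i) := by
  rcases eq_or_ne (nStratum X S x) 0 with hempty | hne
  · have hsplit := nStratum_eq_card_add_card X S W x
    rw [card_eq_zero.mp (by omega : #(stratumArm X S W x true) = 0),
      card_eq_zero.mp (by omega : #(stratumArm X S W x false) = 0), hempty]
    simp
  · have hne' : (nStratum X S x : ℝ) ≠ 0 := Nat.cast_ne_zero.mpr hne
    simp only [tauHTE, stratumArm]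
    field_simp

end

namespace BalancedDesign

variable {X : Fin N → 𝒳} {S W : Fin N → Bool}

omit [Fintype 𝒳] in
theorem card_stratumArm_true_eq_false (hbal : BalancedDesign X S W) (x : 𝒳) :
    #(stratumArm X S W x true) = #(stratumArm X S W x false) := by
  rcases (nStratum X S x).eq_zero_or_pos with hempty | hpos
  · have := nStratum_eq_card_add_card X S W x
    omega
  · exact (hbal x hpos).1

theorem card_sampleArm_true_eq_false (hbal : BalancedDesign X S W) :
    #(sampleArm S W true) = #(sampleArm S W false) := by
  rw [card_eq_sum_card_fiberwise (f := X) (t := univ) fun i _ => mem_univ _,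
    card_eq_sum_card_fiberwise (f := X) (t := univ) fun i _ => mem_univ _]
  simp only [filter_sampleArm_eq_stratumArm, hbal.card_stratumArm_true_eq_false]

theorem one_div_card_sampleArm_true (hbal : BalancedDesign X S W) :
    (1 : ℝ) / #(sampleArm S W true) = 2 / nSample S := by
  rw [nSample_eq_card_add_card S W, ← hbal.card_sampleArm_true_eq_false, ← two_mul,
    Nat.cast_mul, Nat.cast_two, div_mul_cancel_left₀ two_ne_zero, one_div]

end BalancedDesign

theorem tauDIM_sub_tauIPW_decomposition_general
    (X : Fin N → 𝒳) (S W : Fin N → Bool) (Y1 Y0 : Fin N → ℝ) (piHat : 𝒳 → ℝ)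
    (hbal : BalancedDesign X S W) :
    tauDIM S W Y1 Y0 - tauIPW X S W Y1 Y0 piHat =
      ∑ x ∈ univ.filter (fun x => 0 < nStratum X S x),
        ((nStratum X S x : ℝ) / (nSample S : ℝ)) * (1 - 1 / piHat x) *
          tauHTE X S W Y1 Y0 x := by
  calc tauDIM S W Y1 Y0 - tauIPW X S W Y1 Y0 piHat
      = 2 / nSample S * ∑ x, (1 - 1 / piHat x) *
          (∑ i ∈ stratumArm X S W x true, Y1 i - ∑ i ∈ stratumArm X S W x false, Y0 i) := by
        rw [tauDIM_sub_tauIPW_eq, ← hbal.card_sampleArm_true_eq_false, ← mul_sub,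
          hbal.one_div_card_sampleArm_true,
          sum_sampleArm_mul_eq_sum_stratumArm X S W true Y1 fun x => 1 - 1 / piHat x,
          sum_sampleArm_mul_eq_sum_stratumArm X S W false Y0 fun x => 1 - 1 / piHat x,
          ← sum_sub_distrib]
        simp only [mul_sub]
    _ = ∑ x, (nStratum X S x : ℝ) / nSample S * (1 - 1 / piHat x) * tauHTE X S W Y1 Y0 x := by
        rw [mul_sum]
        refine sum_congr rfl fun x _ => ?_
        rw [mul_right_comm, nStratum_div_mul_tauHTE]
        ring
    _ = _ := by
        refine (sum_filter_of_ne fun x _ hx => Nat.pos_of_ne_zero fun hempty => hx ?_).symm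
        simp [hempty]

/-- Under the balanced within-stratum design, the difference between the overall
difference-in-means estimator and the inverse-probability-weighting estimator admits the
exact stratum decomposition
`τ̂_DIM − τ̂_IPW = Σ_{x ∈ 𝒳, n_x > 0} (n_x / n) · (1 − 1/π̂(x)) · τ̂_HTE(x)`. -/
theorem tauDIM_sub_tauIPW_decomposition
    (X : Fin N → 𝒳) (S W : Fin N → Bool) (Y1 Y0 : Fin N → ℝ) (piHat : 𝒳 → ℝ)
    (hpi : ∀ x, 0 < piHat x ∧ piHat x ≤ 1)
    (hn : 0 < nSample S) (hbal : BalancedDesign X S W) :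
    tauDIM S W Y1 Y0 - tauIPW X S W Y1 Y0 piHat =
      ∑ x ∈ univ.filter (fun x => 0 < nStratum X S x),
        ((nStratum X S x : ℝ) / (nSample S : ℝ)) * (1 - 1 / piHat x) *
          tauHTE X S W Y1 Y0 x :=
  tauDIM_sub_tauIPW_decomposition_general X S W Y1 Y0 piHat hbal
end
end

section
/- (Unbiasedness of inverse-probability weighting.) Let (Ω, ℱ, P) be a probability space, 𝒢 ⊆ ℱ a sub-σ-algebra, Y : Ω → ℝ a bounded (or integrable with integrable quotient) ℱ-measurable random variable, and A ∈ ℱ an event such that the σ-algebra generated by the indicator 1_A and the σ-algebra generated by Y are conditionally independent given 𝒢. Let p : Ω → ℝ be a 𝒢-measurable version of the conditional expectation E[1_A | 𝒢], and suppose p > 0 almost everywhere. Then E[(1_A / p) · Y] = E[Y]. -/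
open MeasureTheory ProbabilityTheory

lemma ipw_aux {Ω : Type*} [mΩ : MeasurableSpace Ω] (ν : Measure Ω) [IsProbabilityMeasure ν]
    (Y : Ω → ℝ) (hY : Measurable Y) (A : Set Ω) (hA : MeasurableSet A)
    (h : ∀ q : ℚ, ν (A ∩ Y ⁻¹' Set.Iic (q : ℝ)) = ν A * ν (Y ⁻¹' Set.Iic (q : ℝ))) :
    ∫ y, A.indicator (fun _ => (1 : ℝ)) y * Y y ∂ν = (ν A).toReal * ∫ y, Y y ∂ν := by
  have hmap : (ν.restrict A).map Y = (ν A) • (ν.map Y) := by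
    refine ext_of_generate_finite _
      (BorelSpace.measurable_eq.trans Real.borel_eq_generateFrom_Iic_rat)
      Real.isPiSystem_Iic_rat ?_ ?_
    · rintro s hs
      simp only [Set.mem_iUnion, Set.mem_singleton_iff] at hs
      obtain ⟨q, rfl⟩ := hs
      rw [Measure.map_apply hY measurableSet_Iic,
        Measure.restrict_apply (hY measurableSet_Iic), Set.inter_comm,
        Measure.smul_apply, Measure.map_apply hY measurableSet_Iic, smul_eq_mul]
      exact h q
    · rw [Measure.map_apply hY MeasurableSet.univ, Set.preimage_univ,
        Measure.restrict_apply MeasurableSet.univ, Set.univ_inter,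
        Measure.smul_apply, Measure.map_apply hY MeasurableSet.univ,
        Set.preimage_univ, measure_univ, smul_eq_mul, mul_one]
  have h1 : ∀ y, A.indicator (fun _ => (1 : ℝ)) y * Y y = A.indicator Y y := by
    intro y; by_cases hy : y ∈ A <;> simp [Set.indicator_apply, hy]
  calc ∫ y, A.indicator (fun _ => (1 : ℝ)) y * Y y ∂ν
      = ∫ y, A.indicator Y y ∂ν := by simp_rw [h1]
    _ = ∫ y in A, Y y ∂ν := integral_indicator hA
    _ = ∫ x, id x ∂((ν.restrict A).map Y) :=
        (integral_map hY.aemeasurable aestronglyMeasurable_id).symm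
    _ = ∫ x, id x ∂((ν A) • (ν.map Y)) := by rw [hmap]
    _ = (ν A).toReal • ∫ x, id x ∂(ν.map Y) := integral_smul_measure _ _
    _ = (ν A).toReal * ∫ y, Y y ∂ν := by
        rw [smul_eq_mul, integral_map hY.aemeasurable aestronglyMeasurable_id]
        rfl

/-- (Unbiasedness of inverse-probability weighting.) Let `(Ω, ℱ, P)` be a probability
space, `𝒢 ⊆ ℱ` a sub-σ-algebra, `Y : Ω → ℝ` a bounded `ℱ`-measurable random variable, and
`A ∈ ℱ` an event such that the σ-algebra generated by the indicator `1_A` and the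
σ-algebra generated by `Y` are conditionally independent given `𝒢`. Let `p : Ω → ℝ` be a
`𝒢`-measurable version of the conditional expectation `E[1_A | 𝒢]` with `p > 0` almost
everywhere. Then `E[(1_A / p) · Y] = E[Y]`. -/
theorem ipw_unbiased
    {Ω : Type*} (𝒢 : MeasurableSpace Ω) [mΩ : MeasurableSpace Ω] [StandardBorelSpace Ω]
    (P : Measure Ω) [IsProbabilityMeasure P]
    (h𝒢 : 𝒢 ≤ mΩ)
    (Y : Ω → ℝ) (hY : Measurable Y)
    (M : ℝ) (hYbdd : ∀ ω, |Y ω| ≤ M)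
    (A : Set Ω) (hA : MeasurableSet A)
    (hindep : CondIndep 𝒢
      (MeasurableSpace.comap (A.indicator (fun _ => (1 : ℝ))) inferInstance)
      (MeasurableSpace.comap Y inferInstance) h𝒢 P)
    (p : Ω → ℝ)
    (hp_meas : @Measurable Ω ℝ 𝒢 _ p)
    (hp_ae : p =ᵐ[P] P[A.indicator (fun _ => (1 : ℝ)) | 𝒢])
    (hp_pos : ∀ᵐ ω ∂P, 0 < p ω) :
    ∫ ω, (A.indicator (fun _ => (1 : ℝ)) ω / p ω) * Y ω ∂P = ∫ ω, Y ω ∂P := by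
  set f : Ω → ℝ := A.indicator (fun _ => (1 : ℝ)) with hf_def
  set κ := condExpKernel (mΩ := mΩ) P 𝒢 with hκ_def
  rcases isEmpty_or_nonempty Ω with hΩ | hΩ
  · rw [Measure.eq_zero_of_isEmpty P]; simp
  have hp_meas' : @Measurable Ω ℝ mΩ _ p := hp_meas.mono h𝒢 le_rfl
  have hY' : @Measurable Ω ℝ mΩ _ Y := hY
  have hA' : MeasurableSet[mΩ] A := hA
  have hf_meas : @Measurable Ω ℝ mΩ _ f := measurable_const.indicator hA'
  have hf_nonneg : ∀ ω, 0 ≤ f ω := fun ω => Set.indicator_nonneg (fun _ _ => zero_le_one) ω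
  have hf_le_one : ∀ ω, f ω ≤ 1 := by
    intro ω; by_cases h : ω ∈ A <;> simp [hf_def, Set.indicator_apply, h]
  have hM : 0 ≤ M := le_trans (abs_nonneg _) (hYbdd (Classical.arbitrary Ω))
  have hA_mem : MeasurableSet[MeasurableSpace.comap f inferInstance] A := by
    refine ⟨{(1 : ℝ)}, measurableSet_singleton _, ?_⟩
    ext ω
    by_cases h : ω ∈ A <;> simp [hf_def, Set.indicator_apply, h]
  have hq_ae : ∀ᵐ ω ∂P, ∀ q : ℚ,
      κ ω (A ∩ Y ⁻¹' Set.Iic (q : ℝ)) = κ ω A * κ ω (Y ⁻¹' Set.Iic (q : ℝ)) := by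
    refine ae_of_ae_trim h𝒢 ?_
    rw [ae_all_iff]
    intro q
    exact hindep A (Y ⁻¹' Set.Iic (q : ℝ)) hA_mem
      ⟨Set.Iic (q : ℝ), measurableSet_Iic, rfl⟩
  have hK : ∀ᵐ ω ∂P,
      ∫ y, f y * Y y ∂(κ ω) = (κ ω A).toReal * ∫ y, Y y ∂(κ ω) := by
    filter_upwards [hq_ae] with ω hω
    exact ipw_aux (mΩ := mΩ) (κ ω) Y hY' A hA' hω
  -- integrability of bounded functions
  have hYsm : AEStronglyMeasurable[mΩ] Y P := hY'.aestronglyMeasurable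
  have hY_int : Integrable Y P := by
    refine (integrable_const M).mono' hYsm ?_
    exact Filter.Eventually.of_forall fun ω => (Real.norm_eq_abs _) ▸ hYbdd ω
  have hfYsm : AEStronglyMeasurable[mΩ] (fun ω => f ω * Y ω) P :=
    (hf_meas.mul hY').aestronglyMeasurable
  have hfY_int : Integrable (fun ω => f ω * Y ω) P := by
    refine (integrable_const M).mono' hfYsm ?_
    refine Filter.Eventually.of_forall fun ω => ?_
    rw [Real.norm_eq_abs, abs_mul]
    calc |f ω| * |Y ω| ≤ 1 * M :=
          mul_le_mul (abs_le.2 ⟨by linarith [hf_nonneg ω], hf_le_one ω⟩)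
            (hYbdd ω) (abs_nonneg _) zero_le_one
      _ = M := one_mul M
  have hf_int : Integrable f P := by
    refine (integrable_const (1 : ℝ)).mono' hf_meas.aestronglyMeasurable ?_
    refine Filter.Eventually.of_forall fun ω => ?_
    rw [Real.norm_eq_abs, abs_of_nonneg (hf_nonneg ω)]
    exact hf_le_one ω
  -- conditional expectation of f * Y factorizes
  have hcond_fY : P[fun ω => f ω * Y ω | 𝒢] =ᵐ[P] fun ω => p ω * (P[Y|𝒢]) ω := by
    have h1 : P[fun ω => f ω * Y ω | 𝒢] =ᵐ[P] fun ω => ∫ y, f y * Y y ∂(κ ω) :=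
      condExp_ae_eq_integral_condExpKernel (mΩ := mΩ) h𝒢 hfY_int
    have h2 : (fun ω => ∫ y, Y y ∂(κ ω)) =ᵐ[P] P[Y|𝒢] :=
      (condExp_ae_eq_integral_condExpKernel (mΩ := mΩ) h𝒢 hY_int).symm
    have h3 : (fun ω => (κ ω A).toReal) =ᵐ[P] P[f|𝒢] :=
      condExpKernel_ae_eq_condExp (mΩ := mΩ) h𝒢 hA'
    filter_upwards [h1, h2, h3, hK, hp_ae] with ω e1 e2 e3 eK ep
    rw [e1, eK, e3, ← e2, ep]
  -- truncations
  set c : ℕ → Ω → ℝ := fun n ω => max 0 (min (p ω)⁻¹ (n : ℝ)) with hc_def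
  have hc_meas : ∀ n, @Measurable Ω ℝ 𝒢 _ (c n) :=
    fun n => measurable_const.max (hp_meas.inv.min measurable_const)
  have hc_nonneg : ∀ n ω, 0 ≤ c n ω := fun n ω => le_max_left _ _
  have hc_le_inv : ∀ n ω, 0 < p ω → c n ω ≤ (p ω)⁻¹ := fun n ω hω =>
    max_le (inv_nonneg.2 hω.le) (min_le_left _ _)
  have hc_le : ∀ n ω, c n ω ≤ n := fun n ω =>
    max_le (Nat.cast_nonneg n) (min_le_right _ _)
  have hc_mono : ∀ ω, Monotone fun n => c n ω := fun ω a b hab =>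
    max_le_max le_rfl (min_le_min le_rfl (Nat.cast_le.2 hab))
  have hcf_int : ∀ n, Integrable (c n * f) P := by
    intro n
    refine (integrable_const (n : ℝ)).mono'
      (((hc_meas n).mono h𝒢 le_rfl).mul hf_meas).aestronglyMeasurable ?_
    refine Filter.Eventually.of_forall fun ω => ?_
    rw [Real.norm_eq_abs, Pi.mul_apply,
      abs_of_nonneg (mul_nonneg (hc_nonneg n ω) (hf_nonneg ω))]
    calc c n ω * f ω ≤ (n : ℝ) * 1 :=
          mul_le_mul (hc_le n ω) (hf_le_one ω) (hf_nonneg ω) (Nat.cast_nonneg n)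
      _ = n := mul_one _
  have hcondq : ∀ n, P[c n * f | 𝒢] =ᵐ[P] c n * P[f|𝒢] := fun n =>
    condExp_mul_of_stronglyMeasurable_left ((hc_meas n).stronglyMeasurable) (hcf_int n) hf_int
  have hint_le : ∀ n, ∫ ω, (c n * f) ω ∂P ≤ 1 := by
    intro n
    rw [← integral_condExp h𝒢]
    have hone : (1 : ℝ) = ∫ _, (1 : ℝ) ∂P := by simp
    rw [hone]
    refine integral_mono_ae integrable_condExp (integrable_const 1) ?_
    filter_upwards [hcondq n, hp_ae, hp_pos] with ω e1 e2 e3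
    rw [e1, Pi.mul_apply, ← e2]
    calc c n ω * p ω ≤ (p ω)⁻¹ * p ω :=
          mul_le_mul_of_nonneg_right (hc_le_inv n ω e3) e3.le
      _ = 1 := inv_mul_cancel₀ e3.ne'
  have hlint_n : ∀ n, ∫⁻ ω, ENNReal.ofReal ((c n * f) ω) ∂P ≤ 1 := by
    intro n
    rw [← ofReal_integral_eq_lintegral_ofReal (hcf_int n)
      (Filter.Eventually.of_forall fun ω => mul_nonneg (hc_nonneg n ω) (hf_nonneg ω))]
    exact ENNReal.ofReal_le_one.2 (hint_le n)
  have hsup : ∫⁻ ω, ENNReal.ofReal (f ω / p ω) ∂P ≤ 1 := by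
    have hmono : ∀ᵐ ω ∂P, Monotone fun n => ENNReal.ofReal ((c n * f) ω) :=
      Filter.Eventually.of_forall fun ω a b hab => ENNReal.ofReal_le_ofReal
        (mul_le_mul_of_nonneg_right (hc_mono ω hab) (hf_nonneg ω))
    have hlim : ∫⁻ ω, ⨆ n, ENNReal.ofReal ((c n * f) ω) ∂P
        = ⨆ n, ∫⁻ ω, ENNReal.ofReal ((c n * f) ω) ∂P :=
      lintegral_iSup' (fun n => ((((hc_meas n).mono h𝒢 le_rfl).mul
        hf_meas).ennreal_ofReal).aemeasurable) hmono
    have heq : ∀ᵐ ω ∂P, ENNReal.ofReal (f ω / p ω)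
        = ⨆ n, ENNReal.ofReal ((c n * f) ω) := by
      filter_upwards [hp_pos] with ω hω
      refine le_antisymm ?_ (iSup_le fun n => ENNReal.ofReal_le_ofReal ?_)
      · refine le_iSup_of_le ⌈(p ω)⁻¹⌉₊ (le_of_eq ?_)
        have h1 : min (p ω)⁻¹ ((⌈(p ω)⁻¹⌉₊ : ℕ) : ℝ) = (p ω)⁻¹ :=
          min_eq_left (Nat.le_ceil _)
        have h2 : c ⌈(p ω)⁻¹⌉₊ ω = (p ω)⁻¹ := by
          rw [hc_def]
          simp only []
          rw [h1, max_eq_right (inv_nonneg.2 hω.le)]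
        rw [Pi.mul_apply, h2, div_eq_mul_inv, mul_comm]
      · rw [Pi.mul_apply, div_eq_mul_inv, mul_comm (f ω)]
        exact mul_le_mul_of_nonneg_right (hc_le_inv n ω hω) (hf_nonneg ω)
    rw [lintegral_congr_ae heq, hlim]
    exact iSup_le hlint_n
  have hq_meas : @Measurable Ω ℝ mΩ _ (fun ω => f ω / p ω) := hf_meas.div hp_meas'
  have hq_int : Integrable (fun ω => f ω / p ω) P := by
    refine ⟨hq_meas.aestronglyMeasurable, ?_⟩
    show (∫⁻ ω, ↑‖f ω / p ω‖₊ ∂P) < ⊤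
    calc ∫⁻ ω, ↑‖f ω / p ω‖₊ ∂P = ∫⁻ ω, ENNReal.ofReal (f ω / p ω) ∂P := by
          refine lintegral_congr_ae ?_
          filter_upwards [hp_pos] with ω hω
          exact Real.enorm_eq_ofReal (div_nonneg (hf_nonneg ω) hω.le)
      _ ≤ 1 := hsup
      _ < ⊤ := ENNReal.one_lt_top
  have hg_int : Integrable (fun ω => (f ω / p ω) * Y ω) P := by
    refine (hq_int.const_mul M).mono' ((hq_meas.mul hY').aestronglyMeasurable) ?_
    filter_upwards [hp_pos] with ω hω
    rw [Real.norm_eq_abs, abs_mul, abs_of_nonneg (div_nonneg (hf_nonneg ω) hω.le),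
      mul_comm M]
    exact mul_le_mul_of_nonneg_left (hYbdd ω) (div_nonneg (hf_nonneg ω) hω.le)
  -- final computation
  have hcondg : P[fun ω => (f ω / p ω) * Y ω | 𝒢] =ᵐ[P] P[Y|𝒢] := by
    have hrw : (fun ω => (f ω / p ω) * Y ω)
        = (fun ω => (p ω)⁻¹) * (fun ω => f ω * Y ω) := by
      funext ω; simp [Pi.mul_apply, div_eq_mul_inv]; ring
    have h1 : P[(fun ω => (p ω)⁻¹) * (fun ω => f ω * Y ω) | 𝒢]
        =ᵐ[P] (fun ω => (p ω)⁻¹) * P[fun ω => f ω * Y ω | 𝒢] :=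
      condExp_mul_of_stronglyMeasurable_left (hp_meas.inv.stronglyMeasurable)
        (hrw ▸ hg_int) hfY_int
    rw [hrw]
    filter_upwards [h1, hcond_fY, hp_pos] with ω e1 e2 e3
    rw [e1, Pi.mul_apply, e2, inv_mul_cancel_left₀ e3.ne']
  rw [← integral_condExp h𝒢 (f := fun ω => (f ω / p ω) * Y ω),
    ← integral_condExp h𝒢 (f := Y)]
  exact integral_congr_ae hcondg
end
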